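/- Let k be a field complete with respect to a nonarchimedean multiplicative absolute value |·|, and let P ⊆ ℝ^n be a nonempty pointed rational polyhedron with recession cone σ = Recc(P) and S_σ = σ∨ ∩ ℤ^n. Define k⟨U_P⟩ to be the set of functions a : S_σ → k such that for every v ∈ P, |a_u| e^{⟨u,v⟩} → 0 as ‖u‖ → ∞ (i.e. for every ε > 0 only finitely many u ∈ S_σ satisfy |a_u| e^{⟨u,v⟩} ≥ ε). Then: (a) for a, b ∈ k⟨U_P⟩ and each u ∈ S_σ, the family (a_{u′} b_{u″})_{u′+u″ = u, u′,u″ ∈ S_σ} is summable in k and the convolution (a*b)_u := ∑_{u′+u″=u} a_{u′} b_{u″} again lies in k⟨U_P⟩, making k⟨U_P⟩ a commutative k-algebra; (b) |a|_P := max_{u ∈ S_σ, v ∈ Vert(P)} |a_u| e^{⟨u,v⟩} is a well-defined nonarchimedean norm on k⟨U_P⟩ with |a*b|_P ≤ |a|_P |b|_P and |c·a|_P = |c| |a|_P for c ∈ k; (c) k⟨U_P⟩ is complete with respect to |·|_P. -/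

import Mathlib

open Topology

noncomputable section

/-- The standard pairing `⟨u, v⟩ = ∑ i, u i * v i` on `ℝⁿ`. -/
def dotp {n : ℕ} (u v : Fin n → ℝ) : ℝ := ∑ i, u i * v i

/-- The polyhedral cone generated by the vectors `v 0, …, v (s-1)`. -/
def coneOf {n s : ℕ} (v : Fin s → (Fin n → ℝ)) : Set (Fin n → ℝ) :=
  {x | ∃ lam : Fin s → ℝ, (∀ j, 0 ≤ lam j) ∧ x = ∑ j, lam j • v j}

/-- A set is a polyhedral cone if it is finitely generated. -/
def IsPolyCone {n : ℕ} (σ : Set (Fin n → ℝ)) : Prop :=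
  ∃ (s : ℕ) (v : Fin s → (Fin n → ℝ)), σ = coneOf v

/-- The polar cone `σ∨ = {u | ⟨u,v⟩ ≤ 0 ∀ v ∈ σ}`. -/
def polarCone {n : ℕ} (σ : Set (Fin n → ℝ)) : Set (Fin n → ℝ) :=
  {u | ∀ v ∈ σ, dotp u v ≤ 0}

/-- A cone is pointed if it contains no nonzero linear subspace. -/
def IsPointed {n : ℕ} (σ : Set (Fin n → ℝ)) : Prop :=
  ∀ W : Submodule ℝ (Fin n → ℝ), (W : Set (Fin n → ℝ)) ⊆ σ → W = ⊥

/-- The partial compactification `N_ℝ(σ)`: the set of `ℝ₊`-equivariant monoid morphisms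
`φ : σ∨ → ℝ ∪ {-∞}`, realized as `EReal`-valued functions on `σ∨` never taking the
value `+∞`.  (In `EReal` one has `(0 : EReal) * ⊥ = 0`, which is the convention
`0 · (-∞) = 0`.)  It is topologized as a subspace of the product
`σ∨ → EReal`, i.e. with the topology of pointwise convergence. -/
def NRc {n : ℕ} (σ : Set (Fin n → ℝ)) : Set (↥(polarCone σ) → EReal) :=
  {φ | (∀ u, φ u ≠ ⊤) ∧
    (∀ (u u' : ↥(polarCone σ)) (h : (u : Fin n → ℝ) + (u' : Fin n → ℝ) ∈ polarCone σ),
      φ ⟨(u : Fin n → ℝ) + (u' : Fin n → ℝ), h⟩ = φ u + φ u') ∧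
    (∀ (c : ℝ), 0 ≤ c → ∀ (u : ↥(polarCone σ)) (h : c • (u : Fin n → ℝ) ∈ polarCone σ),
      φ ⟨c • (u : Fin n → ℝ), h⟩ = (c : EReal) * φ u)}

/-- The canonical map `N_ℝ → (σ∨ → EReal)`, `v ↦ (u ↦ ⟨u,v⟩)`; its image lies in `N_ℝ(σ)`. -/
def jmap {n : ℕ} (σ : Set (Fin n → ℝ)) (v : Fin n → ℝ) : ↥(polarCone σ) → EReal :=
  fun u => ((dotp (u : Fin n → ℝ) v : ℝ) : EReal)


/-- The real vector associated to an integer vector. -/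
def intCastVec {n : ℕ} (u : Fin n → ℤ) : Fin n → ℝ := fun i => (u i : ℝ)

/-- The monoid `S_σ = σ∨ ∩ ℤⁿ` of lattice points of the polar cone. -/
def Ssigma {n : ℕ} (σ : Set (Fin n → ℝ)) : AddSubmonoid (Fin n → ℤ) where
  carrier := {u | intCastVec u ∈ polarCone σ}
  zero_mem' := by
    intro v hv
    simp [dotp, intCastVec]
  add_mem' := by
    intro a b ha hb v hv
    have h1 := ha v hv
    have h2 := hb v hv
    have key : dotp (intCastVec (a + b)) v = dotp (intCastVec a) v + dotp (intCastVec b) v := by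
      simp [intCastVec, dotp, add_mul, Finset.sum_add_distrib]
    simpa [key] using add_nonpos h1 h2

/-- The set of vertices of `P`: points of `P` that are the unique maximizer on `P` of
some linear functional (zero-dimensional faces). -/
def vertices {n : ℕ} (P : Set (Fin n → ℝ)) : Set (Fin n → ℝ) :=
  {x | x ∈ P ∧ ∃ c : Fin n → ℝ, ∀ y ∈ P, y ≠ x → dotp c y < dotp c x}

/-- The underlying set of `k⟨U_P⟩`: families `a : S_σ → k` such that for every `v ∈ P`,
`‖a_u‖ e^{⟨u,v⟩} → 0` as `‖u‖ → ∞`, i.e. for every `ε > 0` only finitely many `u ∈ S_σ`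
satisfy `‖a_u‖ e^{⟨u,v⟩} ≥ ε`. -/
def KUP (k : Type*) [NormedField k] {n : ℕ} (σ P : Set (Fin n → ℝ)) :
    Set (↥(Ssigma σ) → k) :=
  {a | ∀ v ∈ P, ∀ ε > (0 : ℝ),
    {u : ↥(Ssigma σ) | ε ≤ ‖a u‖ * Real.exp (dotp (intCastVec (u : Fin n → ℤ)) v)}.Finite}

/-- The convolution product `(a * b)_u = ∑_{u' + u'' = u} a_{u'} b_{u''}` (an
unconditional sum in the complete field `k`). -/
def convKU {k : Type*} [NormedField k] [CompleteSpace k] {n : ℕ} {σ : Set (Fin n → ℝ)}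
    (a b : ↥(Ssigma σ) → k) : ↥(Ssigma σ) → k :=
  fun u => ∑' q : {q : ↥(Ssigma σ) × ↥(Ssigma σ) // q.1 + q.2 = u},
    a (q : ↥(Ssigma σ) × ↥(Ssigma σ)).1 * b (q : ↥(Ssigma σ) × ↥(Ssigma σ)).2

/-- The norm `|a|_P = max_{u ∈ S_σ, v ∈ Vert P} ‖a_u‖ e^{⟨u,v⟩}` (the theorem below
asserts that this supremum is a maximum). -/
def normP {k : Type*} [NormedField k] {n : ℕ} (σ P : Set (Fin n → ℝ))
    (a : ↥(Ssigma σ) → k) : ℝ :=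
  sSup {x : ℝ | ∃ u : ↥(Ssigma σ), ∃ v ∈ vertices P,
    x = ‖a u‖ * Real.exp (dotp (intCastVec (u : Fin n → ℤ)) v)}

open Classical in
/-- The unit of `k⟨U_P⟩`: the indicator function of `0 ∈ S_σ`. -/
def deltaZero (k : Type*) [NormedField k] {n : ℕ} (σ : Set (Fin n → ℝ)) :
    ↥(Ssigma σ) → k :=
  fun u => if u = 0 then 1 else 0

/-!
Weighting the coefficients by `e^{⟨u,v⟩}` turns the defining condition of `k⟨U_P⟩` at a point
`v ∈ P` into "the weighted coefficients tend to zero along the cofinite filter", and since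
`u ↦ ⟨u,v⟩` is additive, the weight of `a_{u'} b_{u''}` with `u' + u'' = u` is the product of the
weights of the factors. In a complete nonarchimedean field this makes every convolution family
summable, with a sum bounded by its largest term; this gives the algebra structure and the
submultiplicativity of `|·|_P`.

The supremum defining `|·|_P` is a maximum because a polyhedron has finitely many vertices (a
vertex is determined by its set of tight constraints). Since `σ` is pointed, for `u ∈ σ∨` every
value of `⟨u,·⟩` on `P` is dominated by its value at some vertex; this is what lets the
coefficientwise limit of a `|·|_P`-Cauchy sequence satisfy the decay condition at every point of
`P`, not only at the vertices.
-/

open Filter Set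

lemma tendsto_cofinite_zero_iff_finite {α : Type*} {f : α → ℝ} (hf : ∀ x, 0 ≤ f x) :
    Tendsto f cofinite (𝓝 0) ↔ ∀ ε > 0, {x | ε ≤ f x}.Finite := by
  simp only [Metric.tendsto_nhds, Real.dist_eq, sub_zero, abs_of_nonneg (hf _),
    eventually_cofinite, not_lt]

lemma tendsto_mul_prod_cofinite {α β : Type*} {f : α → ℝ} {g : β → ℝ}
    (hf : Tendsto f cofinite (𝓝 0)) (hg : Tendsto g cofinite (𝓝 0)) :
    Tendsto (fun p : α × β => f p.1 * g p.2) cofinite (𝓝 0) := by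
  obtain ⟨Cf, hCf⟩ := hf.norm.bddAbove_range_of_cofinite
  obtain ⟨Cg, hCg⟩ := hg.norm.bddAbove_range_of_cofinite
  rw [← coprod_cofinite]
  refine tendsto_sup.2 ⟨?_, ?_⟩
  · exact (hf.comp tendsto_comap).zero_mul_isBoundedUnder_le
      (isBoundedUnder_of ⟨Cg, fun p => hCg ⟨p.2, rfl⟩⟩)
  · exact isBoundedUnder_le_mul_tendsto_zero
      (isBoundedUnder_of ⟨Cf, fun p => hCf ⟨p.1, rfl⟩⟩) (hg.comp tendsto_comap)

lemma isGreatest_sSup_of_finite_inter_Ici {S : Set ℝ} (hne : S.Nonempty)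
    (hnn : ∀ x ∈ S, 0 ≤ x) (hfin : ∀ ε > 0, (S ∩ Ici ε).Finite) : IsGreatest S (sSup S) := by
  suffices ∃ m, IsGreatest S m from this.elim fun m hm => hm.csSup_eq ▸ hm
  by_cases hpos : ∃ x ∈ S, 0 < x
  · obtain ⟨x, hxS, hx⟩ := hpos
    obtain ⟨m, ⟨hmS, hxm⟩, hmax⟩ :=
      (S ∩ Ici x).exists_max_image id (hfin x hx) ⟨x, hxS, Set.self_mem_Ici⟩
    refine ⟨m, hmS, fun y hy => ?_⟩
    rcases le_total x y with hxy | hyx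
    · exact hmax y ⟨hy, hxy⟩
    · exact hyx.trans hxm
  · simp only [not_exists, not_and, not_lt] at hpos
    obtain ⟨x, hx⟩ := hne
    exact ⟨x, hx, fun y hy => (hpos y hy).trans (hnn x hx)⟩

section Restricted

variable {M : Type*} {k : Type*} [NormedField k]

def weightedNorm (w : M → ℝ) (a : M → k) (u : M) : ℝ := ‖a u‖ * Real.exp (w u)

def IsRestricted (w : M → ℝ) (a : M → k) : Prop :=
  Tendsto (weightedNorm w a) cofinite (𝓝 0)

variable {w : M → ℝ} {a b c : M → k}

lemma weightedNorm_nonneg (w : M → ℝ) (a : M → k) (u : M) : 0 ≤ weightedNorm w a u :=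
  mul_nonneg (norm_nonneg _) (Real.exp_pos _).le

lemma isRestricted_iff_finite :
    IsRestricted w a ↔ ∀ ε > 0, {u | ε ≤ weightedNorm w a u}.Finite :=
  tendsto_cofinite_zero_iff_finite (weightedNorm_nonneg w a)

lemma IsRestricted.add (ha : IsRestricted w a) (hb : IsRestricted w b) :
    IsRestricted w (a + b) := by
  refine squeeze_zero (weightedNorm_nonneg w _) (fun u => ?_) (by simpa using Tendsto.add ha hb)
  simp only [weightedNorm, Pi.add_apply]
  rw [← add_mul]
  gcongr
  exact norm_add_le _ _

lemma IsRestricted.sub (ha : IsRestricted w a) (hb : IsRestricted w b) :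
    IsRestricted w (a - b) := by
  refine squeeze_zero (weightedNorm_nonneg w _) (fun u => ?_) (by simpa using Tendsto.add ha hb)
  simp only [weightedNorm, Pi.sub_apply]
  rw [← add_mul]
  gcongr
  exact norm_sub_le _ _

lemma IsRestricted.const_smul (ha : IsRestricted w a) (c : k) : IsRestricted w (c • a) := by
  have : weightedNorm w (c • a) = fun u => ‖c‖ * weightedNorm w a u := by
    ext u; simp [weightedNorm, mul_assoc]
  simpa [IsRestricted, this] using ha.const_mul ‖c‖

lemma isRestricted_of_support_finite (ha : (Function.support a).Finite) : IsRestricted w a :=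
  tendsto_const_nhds.congr' <| ha.eventually_cofinite_notMem.mono fun u hu => by
    simp [weightedNorm, Function.notMem_support.1 hu]

lemma isRestricted_of_forall_approx
    (h : ∀ ε > 0, ∃ g, IsRestricted w g ∧ ∀ u, weightedNorm w (g - a) u ≤ ε) :
    IsRestricted w a := by
  refine Metric.tendsto_nhds.2 fun δ hδ => ?_
  obtain ⟨g, hg, hga⟩ := h (δ / 2) (half_pos hδ)
  filter_upwards [hg.eventually_lt_const (half_pos hδ)] with u hu
  have : weightedNorm w a u ≤ weightedNorm w g u + weightedNorm w (g - a) u := by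
    simp only [weightedNorm, Pi.sub_apply, ← add_mul]
    gcongr
    exact norm_le_insert _ _
  rw [Real.dist_eq, sub_zero, abs_of_nonneg (weightedNorm_nonneg w a u)]
  linarith [hga u]

end Restricted

section Convolution

variable {M : Type*} [AddCommMonoid M] {k : Type*} [NormedField k]

def convolve (a b : M → k) (u : M) : k :=
  ∑' q : {q : M × M // q.1 + q.2 = u}, a q.1.1 * b q.1.2

variable {w : M →+ ℝ} {a b c : M → k}

lemma norm_mul_eq_weightedNorm_mul (w : M →+ ℝ) (a b : M → k) (x y : M) :
    ‖a x * b y‖ = weightedNorm w a x * weightedNorm w b y * Real.exp (-w (x + y)) := by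
  simp only [weightedNorm, norm_mul, map_add, Real.exp_neg, Real.exp_add]
  field_simp

lemma weightedNorm_convolve_le [IsUltrametricDist k] {u : M} {C : ℝ} (hC : 0 ≤ C)
    (h : ∀ x y, x + y = u → weightedNorm w a x * weightedNorm w b y ≤ C) :
    weightedNorm w (convolve a b) u ≤ C := by
  have hsum : ‖convolve a b u‖ ≤ C * Real.exp (-w u) := by
    refine IsUltrametricDist.norm_tsum_le_of_forall_le_of_nonneg (by positivity) ?_
    rintro ⟨⟨x, y⟩, rfl⟩
    rw [norm_mul_eq_weightedNorm_mul w]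
    gcongr
    exact h x y rfl
  calc weightedNorm w (convolve a b) u ≤ C * Real.exp (-w u) * Real.exp (w u) := by
        unfold weightedNorm; gcongr
    _ = C := by rw [mul_assoc, ← Real.exp_add, neg_add_cancel, Real.exp_zero, mul_one]

lemma IsRestricted.convolve [IsUltrametricDist k] (ha : IsRestricted w a)
    (hb : IsRestricted w b) : IsRestricted w (convolve a b) := by
  rw [isRestricted_iff_finite]
  intro ε hε
  have hprod := (tendsto_cofinite_zero_iff_finite fun p : M × M =>
    mul_nonneg (weightedNorm_nonneg w a p.1) (weightedNorm_nonneg w b p.2)).1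
    (tendsto_mul_prod_cofinite ha hb) (ε / 2) (half_pos hε)
  refine (hprod.image fun p => p.1 + p.2).subset fun u hu => ?_
  by_contra hne
  have : weightedNorm w (_root_.convolve a b) u ≤ ε / 2 :=
    weightedNorm_convolve_le (half_pos hε).le fun x y hxy =>
      (not_le.1 fun hle => hne ⟨(x, y), hle, hxy⟩).le
  exact (half_lt_self hε).not_ge (le_trans hu this)

lemma convolve_comm (a b : M → k) : convolve a b = convolve b a := by
  funext u
  let e : {q : M × M // q.1 + q.2 = u} ≃ {q : M × M // q.1 + q.2 = u} :=
    (Equiv.prodComm M M).subtypeEquiv fun q => by rw [Equiv.prodComm_apply, Prod.fst_swap,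
      Prod.snd_swap, add_comm]
  rw [convolve, ← e.tsum_eq]
  exact tsum_congr fun q => mul_comm _ _

lemma convolve_eq_self_of_eq_indicator {δ : M → k} (hδ₀ : δ 0 = 1) (hδ : ∀ x ≠ 0, δ x = 0)
    (a : M → k) : convolve δ a = a := by
  funext u
  rw [convolve, tsum_eq_single ⟨(0, u), zero_add u⟩]
  · rw [hδ₀, one_mul]
  · rintro ⟨⟨x, y⟩, hxy⟩ hne
    have hx : x ≠ 0 := by
      rintro rfl
      obtain rfl : y = u := by simpa using hxy
      exact hne rfl
    rw [hδ x hx, zero_mul]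

variable [CompleteSpace k]

lemma convolve_convolve_eq_tsum {u : M}
    (h : Summable fun t : {t : M × M × M // t.1 + t.2.1 + t.2.2 = u} =>
      a t.1.1 * b t.1.2.1 * c t.1.2.2) :
    convolve (convolve a b) c u =
      ∑' t : {t : M × M × M // t.1 + t.2.1 + t.2.2 = u}, a t.1.1 * b t.1.2.1 * c t.1.2.2 := by
  let e : (Σ q : {q : M × M // q.1 + q.2 = u}, {p : M × M // p.1 + p.2 = q.1.1}) ≃
      {t : M × M × M // t.1 + t.2.1 + t.2.2 = u} :=
    { toFun s := ⟨(s.2.1.1, s.2.1.2, s.1.1.2), by rw [s.2.2, s.1.2]⟩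
      invFun t := ⟨⟨(t.1.1 + t.1.2.1, t.1.2.2), t.2⟩, ⟨(t.1.1, t.1.2.1), rfl⟩⟩
      left_inv := by
        rintro ⟨⟨⟨q₁, q₂⟩, hq⟩, ⟨⟨p₁, p₂⟩, hp⟩⟩
        dsimp only at hp
        subst hp
        rfl
      right_inv _ := rfl }
  rw [← e.tsum_eq, Summable.tsum_sigma (by exact e.summable_iff.2 h)]
  simp only [convolve, ← tsum_mul_right]
  rfl

lemma convolve_convolve_eq_tsum' {u : M}
    (h : Summable fun t : {t : M × M × M // t.1 + t.2.1 + t.2.2 = u} =>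
      a t.1.1 * b t.1.2.1 * c t.1.2.2) :
    convolve a (convolve b c) u =
      ∑' t : {t : M × M × M // t.1 + t.2.1 + t.2.2 = u}, a t.1.1 * b t.1.2.1 * c t.1.2.2 := by
  let e : (Σ q : {q : M × M // q.1 + q.2 = u}, {p : M × M // p.1 + p.2 = q.1.2}) ≃
      {t : M × M × M // t.1 + t.2.1 + t.2.2 = u} :=
    { toFun s := ⟨(s.1.1.1, s.2.1.1, s.2.1.2), by rw [add_assoc, s.2.2, s.1.2]⟩
      invFun t := ⟨⟨(t.1.1, t.1.2.1 + t.1.2.2), by rw [← add_assoc]; exact t.2⟩,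
        ⟨(t.1.2.1, t.1.2.2), rfl⟩⟩
      left_inv := by
        rintro ⟨⟨⟨q₁, q₂⟩, hq⟩, ⟨⟨p₁, p₂⟩, hp⟩⟩
        dsimp only at hp
        subst hp
        rfl
      right_inv _ := rfl }
  rw [← e.tsum_eq, Summable.tsum_sigma (by exact e.summable_iff.2 h)]
  simp only [convolve, ← tsum_mul_left, mul_assoc]
  rfl

variable [IsUltrametricDist k]

lemma IsRestricted.summable_antidiagonal (ha : IsRestricted w a) (hb : IsRestricted w b)
    (u : M) : Summable fun q : {q : M × M // q.1 + q.2 = u} => a q.1.1 * b q.1.2 := by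
  refine NonarchimedeanAddGroup.summable_of_tendsto_cofinite_zero
    (tendsto_zero_iff_norm_tendsto_zero.2 ?_)
  have := ((tendsto_mul_prod_cofinite ha hb).comp
    (Subtype.val_injective (p := fun q : M × M => q.1 + q.2 = u)).tendsto_cofinite).mul_const
    (Real.exp (-w u))
  rw [zero_mul] at this
  refine this.congr fun q => ?_
  rw [norm_mul_eq_weightedNorm_mul w, q.2]
  rfl

lemma IsRestricted.summable_antidiagonal₃ (ha : IsRestricted w a) (hb : IsRestricted w b)
    (hc : IsRestricted w c) (u : M) :
    Summable fun t : {t : M × M × M // t.1 + t.2.1 + t.2.2 = u} =>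
      a t.1.1 * b t.1.2.1 * c t.1.2.2 := by
  refine NonarchimedeanAddGroup.summable_of_tendsto_cofinite_zero
    (tendsto_zero_iff_norm_tendsto_zero.2 ?_)
  have := ((tendsto_mul_prod_cofinite ha (tendsto_mul_prod_cofinite hb hc)).comp
    (Subtype.val_injective (p := fun t : M × M × M => t.1 + t.2.1 + t.2.2 = u)).tendsto_cofinite
    ).mul_const (Real.exp (-w u))
  rw [zero_mul] at this
  refine this.congr ?_
  rintro ⟨⟨x, y, z⟩, rfl⟩
  simp only [Function.comp_apply, weightedNorm, norm_mul, map_add, Real.exp_neg, Real.exp_add]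
  field_simp

lemma convolve_add (ha : IsRestricted w a) (hb : IsRestricted w b)
    (hc : IsRestricted w c) : convolve a (b + c) = convolve a b + convolve a c := by
  funext u
  rw [Pi.add_apply, convolve, convolve, convolve, ← (ha.summable_antidiagonal hb u).tsum_add
    (ha.summable_antidiagonal hc u)]
  exact tsum_congr fun q => mul_add _ _ _

lemma convolve_assoc (ha : IsRestricted w a) (hb : IsRestricted w b)
    (hc : IsRestricted w c) : convolve (convolve a b) c = convolve a (convolve b c) := by
  funext u
  rw [convolve_convolve_eq_tsum (ha.summable_antidiagonal₃ hb hc u),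
    convolve_convolve_eq_tsum' (ha.summable_antidiagonal₃ hb hc u)]

end Convolution

section Polyhedron

variable {n r : ℕ}

lemma dotp_eq_dotProduct (u v : Fin n → ℝ) : dotp u v = u ⬝ᵥ v := rfl

def polyhedron (A : Fin r → Fin n → ℝ) (b : Fin r → ℝ) : Set (Fin n → ℝ) :=
  {v | ∀ i, A i ⬝ᵥ v ≤ b i}

open Classical in
def tightSet (A : Fin r → Fin n → ℝ) (b : Fin r → ℝ) (v : Fin n → ℝ) : Finset (Fin r) :=
  {i | A i ⬝ᵥ v = b i}

def CommonKernelTrivial (A : Fin r → Fin n → ℝ) (T : Finset (Fin r)) : Prop :=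
  ∀ d : Fin n → ℝ, (∀ i ∈ T, A i ⬝ᵥ d = 0) → d = 0

variable {A : Fin r → Fin n → ℝ} {b : Fin r → ℝ} {v w : Fin n → ℝ}

lemma mem_tightSet {i : Fin r} : i ∈ tightSet A b v ↔ A i ⬝ᵥ v = b i := by
  classical
  simp [tightSet]

lemma eventually_add_smul_mem_polyhedron (hv : v ∈ polyhedron A b) {d : Fin n → ℝ}
    (hd : ∀ i ∈ tightSet A b v, A i ⬝ᵥ d = 0) :
    ∀ᶠ s in 𝓝 (0 : ℝ), v + s • d ∈ polyhedron A b := by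
  simp only [polyhedron, Set.mem_ofPred_eq, eventually_all]
  intro i
  by_cases hi : A i ⬝ᵥ v = b i
  · refine Eventually.of_forall fun s => ?_
    rw [dotProduct_add, dotProduct_smul, hd i (mem_tightSet.2 hi), smul_zero, add_zero, hi]
  · have hcont : Continuous fun s : ℝ => A i ⬝ᵥ (v + s • d) := by fun_prop
    have hlt : A i ⬝ᵥ (v + (0 : ℝ) • d) < b i := by
      rw [zero_smul, add_zero]
      exact (hv i).lt_of_ne hi
    exact (hcont.tendsto 0 |>.eventually (gt_mem_nhds hlt)).mono fun _ => le_of_lt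

lemma commonKernelTrivial_tightSet_of_mem_vertices (hv : v ∈ vertices (polyhedron A b)) :
    CommonKernelTrivial A (tightSet A b v) := by
  obtain ⟨hvP, c, hc⟩ := hv
  intro d hd
  by_contra hd0
  have hd' : ∀ i ∈ tightSet A b v, A i ⬝ᵥ (-d) = 0 := fun i hi => by
    rw [dotProduct_neg, hd i hi, neg_zero]
  obtain ⟨s, ⟨hs₁, hs₂⟩, hs₀⟩ := (((eventually_add_smul_mem_polyhedron hvP hd).and
    (eventually_add_smul_mem_polyhedron hvP hd')).filter_mono nhdsWithin_le_nhds |>.and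
    self_mem_nhdsWithin).exists (f := 𝓝[≠] (0 : ℝ))
  have hsd : s • d ≠ 0 := smul_ne_zero hs₀ hd0
  have h₁ := hc _ hs₁ (by simpa using hsd)
  have h₂ := hc _ hs₂ (by simpa using hsd)
  simp only [dotp_eq_dotProduct, dotProduct_add, dotProduct_smul, dotProduct_neg,
    smul_eq_mul] at h₁ h₂
  linarith

lemma mem_vertices_of_commonKernelTrivial (hv : v ∈ polyhedron A b)
    (hT : CommonKernelTrivial A (tightSet A b v)) : v ∈ vertices (polyhedron A b) := by
  refine ⟨hv, ∑ i ∈ tightSet A b v, A i, fun y hy hyv => ?_⟩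
  simp only [dotp_eq_dotProduct, sum_dotProduct]
  have hle : ∀ i ∈ tightSet A b v, A i ⬝ᵥ y ≤ A i ⬝ᵥ v := fun i hi =>
    (mem_tightSet.1 hi).symm ▸ hy i
  obtain ⟨i, hi, hlt⟩ : ∃ i ∈ tightSet A b v, A i ⬝ᵥ y < A i ⬝ᵥ v := by
    by_contra! hge
    refine hyv (sub_eq_zero.1 (hT (y - v) fun i hi => ?_))
    rw [dotProduct_sub, sub_eq_zero]
    exact (hle i hi).antisymm (hge i hi)
  exact Finset.sum_lt_sum hle ⟨i, hi, hlt⟩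

lemma vertices_polyhedron_finite : (vertices (polyhedron A b)).Finite := by
  refine Set.Finite.of_finite_image (f := tightSet A b) (Set.toFinite _) fun x hx y _ hxy => ?_
  refine (sub_eq_zero.1 (commonKernelTrivial_tightSet_of_mem_vertices hx (x - y) fun i hi => ?_))
  have hi' : i ∈ tightSet A b y := hxy ▸ hi
  rw [dotProduct_sub, mem_tightSet.1 hi, mem_tightSet.1 hi', sub_self]

lemma commonKernelTrivial_univ_of_isPointed (h : IsPointed (polyhedron A 0)) :
    CommonKernelTrivial A Finset.univ := by
  let K := LinearMap.ker (Matrix.mulVecLin (Matrix.of A))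
  have hK : K = ⊥ := h K fun x hx i => (congrFun (LinearMap.mem_ker.1 hx) i).le
  have hd : ∀ d, (∀ i ∈ Finset.univ, A i ⬝ᵥ d = 0) → d ∈ K := fun d hd =>
    LinearMap.mem_ker.2 (funext fun i => hd i (Finset.mem_univ i))
  exact fun d h => by simpa [hK] using hd d h

lemma exists_tight_of_dotProduct_pos (hv : v ∈ polyhedron A b) {e : Fin n → ℝ} {j : Fin r}
    (hj : 0 < A j ⬝ᵥ e) :
    ∃ t : ℝ, 0 ≤ t ∧ v + t • e ∈ polyhedron A b ∧
      ∃ j, 0 < A j ⬝ᵥ e ∧ A j ⬝ᵥ (v + t • e) = b j := by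
  classical
  let J : Finset (Fin r) := {j | 0 < A j ⬝ᵥ e}
  let ratio i := (b i - A i ⬝ᵥ v) / A i ⬝ᵥ e
  obtain ⟨j₀, hj₀J, hmin⟩ := J.exists_min_image ratio ⟨j, by simpa [J] using hj⟩
  have hj₀ : 0 < A j₀ ⬝ᵥ e := by simpa [J] using hj₀J
  have ht : 0 ≤ ratio j₀ := div_nonneg (sub_nonneg.2 (hv j₀)) hj₀.le
  refine ⟨ratio j₀, ht, fun i => ?_, j₀, hj₀, ?_⟩
  · rw [dotProduct_add, dotProduct_smul, smul_eq_mul]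
    rcases le_or_gt (A i ⬝ᵥ e) 0 with he | he
    · linarith [hv i, mul_nonpos_of_nonneg_of_nonpos ht he]
    · have := hmin i (by simpa [J] using he)
      rw [le_div_iff₀ he] at this
      linarith
  · rw [dotProduct_add, dotProduct_smul, smul_eq_mul, div_mul_cancel₀ _ hj₀.ne']
    ring

lemma exists_direction_of_not_commonKernelTrivial (hw : ∀ x ∈ polyhedron A 0, w ⬝ᵥ x ≤ 0)
    (hlin : CommonKernelTrivial A Finset.univ) {T : Finset (Fin r)}
    (hT : ¬ CommonKernelTrivial A T) :
    ∃ e, (∀ i ∈ T, A i ⬝ᵥ e = 0) ∧ 0 ≤ w ⬝ᵥ e ∧ ∃ j, 0 < A j ⬝ᵥ e := by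
  simp only [CommonKernelTrivial, not_forall] at hT
  obtain ⟨d, hdT, hd0⟩ := hT
  have hdT' : ∀ i ∈ T, A i ⬝ᵥ (-d) = 0 := fun i hi => by rw [dotProduct_neg, hdT i hi, neg_zero]
  wlog hwd : 0 ≤ w ⬝ᵥ d generalizing d
  · exact this (-d) hdT' (neg_ne_zero.2 hd0) (by simpa using hdT) (by
      rw [dotProduct_neg]; linarith)
  by_cases hex : ∃ j, 0 < A j ⬝ᵥ d
  · exact ⟨d, hdT, hwd, hex⟩
  simp only [not_exists, not_lt] at hex
  have hwd' := hw d fun i => hex i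
  refine ⟨-d, hdT', by rw [dotProduct_neg]; linarith, ?_⟩
  by_contra! hneg
  exact hd0 (hlin d fun j _ => (hex j).antisymm (by simpa using hneg j))

lemma exists_tightSet_ssubset (hw : ∀ x ∈ polyhedron A 0, w ⬝ᵥ x ≤ 0)
    (hlin : CommonKernelTrivial A Finset.univ) (hv : v ∈ polyhedron A b)
    (hT : ¬ CommonKernelTrivial A (tightSet A b v)) :
    ∃ v' ∈ polyhedron A b, w ⬝ᵥ v ≤ w ⬝ᵥ v' ∧ tightSet A b v ⊂ tightSet A b v' := by
  obtain ⟨e, heT, hwe, j, hj⟩ := exists_direction_of_not_commonKernelTrivial hw hlin hT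
  obtain ⟨t, ht, hv', j', hj', hj'v'⟩ := exists_tight_of_dotProduct_pos hv hj
  refine ⟨v + t • e, hv', ?_, ?_⟩
  · rw [dotProduct_add, dotProduct_smul, smul_eq_mul]
    linarith [mul_nonneg ht hwe]
  · refine (Finset.ssubset_iff_of_subset fun i hi => ?_).2
      ⟨j', mem_tightSet.2 hj'v', fun h => hj'.ne' (heT j' h)⟩
    rw [mem_tightSet, dotProduct_add, dotProduct_smul, heT i hi, smul_zero, add_zero]
    exact mem_tightSet.1 hi

theorem exists_mem_vertices_dotProduct_le (hw : ∀ x ∈ polyhedron A 0, w ⬝ᵥ x ≤ 0)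
    (hlin : CommonKernelTrivial A Finset.univ) (hv : v ∈ polyhedron A b) :
    ∃ z ∈ vertices (polyhedron A b), w ⬝ᵥ v ≤ w ⬝ᵥ z := by
  let S := {x ∈ polyhedron A b | w ⬝ᵥ v ≤ w ⬝ᵥ x}
  -- a point of `S` with the largest number of tight constraints must be a vertex
  obtain ⟨_, ⟨x, hxS, rfl⟩, hmax⟩ := Set.exists_max_image (tightSet A b '' S) Finset.card
    (Set.toFinite _) ⟨_, v, ⟨hv, le_rfl⟩, rfl⟩
  refine ⟨x, mem_vertices_of_commonKernelTrivial hxS.1 (by_contra fun hT => ?_), hxS.2⟩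
  obtain ⟨x', hx', hwx', hss⟩ := exists_tightSet_ssubset hw hlin hxS.1 hT
  exact (Finset.card_lt_card hss).not_ge (hmax _ ⟨x', ⟨hx', hxS.2.trans hwx'⟩, rfl⟩)

end Polyhedron

section KUP

variable {k : Type*} [NormedField k] {n : ℕ} {σ P : Set (Fin n → ℝ)}
  {a b c : ↥(Ssigma σ) → k}

def pairingAt (σ : Set (Fin n → ℝ)) (v : Fin n → ℝ) : ↥(Ssigma σ) →+ ℝ where
  toFun u := dotp (intCastVec u) v
  map_zero' := by simp [dotp, intCastVec]
  map_add' x y := by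
    simp only [dotp_eq_dotProduct, ← add_dotProduct]
    congr 1
    ext i
    simp [intCastVec]

lemma mem_KUP_iff : a ∈ KUP k σ P ↔ ∀ v ∈ P, IsRestricted (pairingAt σ v) a :=
  forall₂_congr fun _ _ => isRestricted_iff_finite.symm

lemma add_mem_KUP (ha : a ∈ KUP k σ P) (hb : b ∈ KUP k σ P) : a + b ∈ KUP k σ P :=
  mem_KUP_iff.2 fun v hv => (mem_KUP_iff.1 ha v hv).add (mem_KUP_iff.1 hb v hv)

lemma sub_mem_KUP (ha : a ∈ KUP k σ P) (hb : b ∈ KUP k σ P) : a - b ∈ KUP k σ P :=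
  mem_KUP_iff.2 fun v hv => (mem_KUP_iff.1 ha v hv).sub (mem_KUP_iff.1 hb v hv)

lemma smul_mem_KUP (ha : a ∈ KUP k σ P) (c : k) : c • a ∈ KUP k σ P :=
  mem_KUP_iff.2 fun v hv => (mem_KUP_iff.1 ha v hv).const_smul c

lemma deltaZero_mem_KUP : deltaZero k σ ∈ KUP k σ P := by
  classical
  refine mem_KUP_iff.2 fun v _ =>
    isRestricted_of_support_finite ((Set.finite_singleton 0).subset ?_)
  intro u hu
  by_contra h
  exact hu (if_neg h)

lemma deltaZero_convKU [CompleteSpace k] (a : ↥(Ssigma σ) → k) :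
    convKU (deltaZero k σ) a = a :=
  convolve_eq_self_of_eq_indicator (δ := deltaZero k σ) (if_pos rfl) (fun _ h => if_neg h) a

variable [IsUltrametricDist k] [CompleteSpace k]

lemma summable_of_mem_KUP (hP : P.Nonempty) (ha : a ∈ KUP k σ P) (hb : b ∈ KUP k σ P)
    (u : ↥(Ssigma σ)) :
    Summable fun q : {q : ↥(Ssigma σ) × ↥(Ssigma σ) // q.1 + q.2 = u} =>
      a (q : ↥(Ssigma σ) × ↥(Ssigma σ)).1 * b (q : ↥(Ssigma σ) × ↥(Ssigma σ)).2 :=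
  let ⟨v, hv⟩ := hP
  (mem_KUP_iff.1 ha v hv).summable_antidiagonal (mem_KUP_iff.1 hb v hv) u

lemma convKU_mem_KUP (ha : a ∈ KUP k σ P) (hb : b ∈ KUP k σ P) : convKU a b ∈ KUP k σ P :=
  mem_KUP_iff.2 fun v hv => (mem_KUP_iff.1 ha v hv).convolve (mem_KUP_iff.1 hb v hv)

lemma convKU_add (hP : P.Nonempty) (ha : a ∈ KUP k σ P) (hb : b ∈ KUP k σ P)
    (hc : c ∈ KUP k σ P) : convKU a (b + c) = convKU a b + convKU a c :=
  let ⟨v, hv⟩ := hP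
  convolve_add (mem_KUP_iff.1 ha v hv) (mem_KUP_iff.1 hb v hv) (mem_KUP_iff.1 hc v hv)

lemma convKU_assoc (hP : P.Nonempty) (ha : a ∈ KUP k σ P) (hb : b ∈ KUP k σ P)
    (hc : c ∈ KUP k σ P) : convKU (convKU a b) c = convKU a (convKU b c) :=
  let ⟨v, hv⟩ := hP
  convolve_assoc (mem_KUP_iff.1 ha v hv) (mem_KUP_iff.1 hb v hv) (mem_KUP_iff.1 hc v hv)

end KUP

section NormP

variable {k : Type*} [NormedField k] {n : ℕ} {σ P : Set (Fin n → ℝ)} {a b : ↥(Ssigma σ) → k}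

lemma normP_le {C : ℝ} (hC : 0 ≤ C)
    (h : ∀ u : ↥(Ssigma σ), ∀ v ∈ vertices P, ‖a u‖ * Real.exp (dotp (intCastVec u) v) ≤ C) :
    normP σ P a ≤ C :=
  Real.sSup_le (by rintro _ ⟨u, v, hv, rfl⟩; exact h u v hv) hC

lemma normP_nonneg (a : ↥(Ssigma σ) → k) : 0 ≤ normP σ P a :=
  Real.sSup_nonneg (by rintro _ ⟨u, v, -, rfl⟩; positivity)

lemma normP_zero : normP σ P (0 : ↥(Ssigma σ) → k) = 0 :=
  (normP_le le_rfl fun u v _ => by simp).antisymm (normP_nonneg _)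

lemma normP_smul (c : k) (a : ↥(Ssigma σ) → k) : normP σ P (c • a) = ‖c‖ * normP σ P a := by
  rw [normP, normP, ← smul_eq_mul, ← Real.sSup_smul_of_nonneg (norm_nonneg c)]
  congr 1
  ext x
  simp [Set.mem_smul_set, mul_assoc, eq_comm]

lemma isGreatest_normP (hV : (vertices P).Finite) (hVne : (vertices P).Nonempty)
    (ha : a ∈ KUP k σ P) :
    IsGreatest {x : ℝ | ∃ u : ↥(Ssigma σ), ∃ v ∈ vertices P,
      x = ‖a u‖ * Real.exp (dotp (intCastVec (u : Fin n → ℤ)) v)} (normP σ P a) := by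
  obtain ⟨v₀, hv₀⟩ := hVne
  refine isGreatest_sSup_of_finite_inter_Ici ⟨_, 0, v₀, hv₀, rfl⟩
    (by rintro _ ⟨u, v, -, rfl⟩; positivity) fun ε hε => ?_
  refine (hV.biUnion fun v hv => (isRestricted_iff_finite.1 (mem_KUP_iff.1 ha v hv.1) ε hε).image
    (weightedNorm (pairingAt σ v) a)).subset ?_
  rintro _ ⟨⟨u, v, hv, rfl⟩, hx⟩
  exact Set.mem_biUnion hv ⟨u, hx, rfl⟩

lemma le_normP (hV : (vertices P).Finite) (ha : a ∈ KUP k σ P) {v : Fin n → ℝ}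
    (hv : v ∈ vertices P) (u : ↥(Ssigma σ)) :
    ‖a u‖ * Real.exp (dotp (intCastVec u) v) ≤ normP σ P a :=
  (isGreatest_normP hV ⟨v, hv⟩ ha).2 ⟨u, v, hv, rfl⟩

lemma normP_eq_zero_iff (hV : (vertices P).Finite) (hVne : (vertices P).Nonempty)
    (ha : a ∈ KUP k σ P) : normP σ P a = 0 ↔ a = 0 := by
  refine ⟨fun h => funext fun u => ?_, fun h => h ▸ normP_zero⟩
  obtain ⟨v, hv⟩ := hVne
  have := h ▸ le_normP hV ha hv u
  exact norm_le_zero_iff.1 (nonpos_of_mul_nonpos_left this (Real.exp_pos _))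

variable [IsUltrametricDist k]

lemma normP_add_le (hV : (vertices P).Finite) (ha : a ∈ KUP k σ P) (hb : b ∈ KUP k σ P) :
    normP σ P (a + b) ≤ max (normP σ P a) (normP σ P b) := by
  refine normP_le (le_max_of_le_left (normP_nonneg a)) fun u v hv => ?_
  calc ‖(a + b) u‖ * Real.exp (dotp (intCastVec u) v)
      ≤ max ‖a u‖ ‖b u‖ * Real.exp (dotp (intCastVec u) v) := by
        gcongr
        exact IsUltrametricDist.norm_add_le_max _ _
    _ = max (‖a u‖ * Real.exp (dotp (intCastVec u) v))
          (‖b u‖ * Real.exp (dotp (intCastVec u) v)) :=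
        max_mul_of_nonneg _ _ (Real.exp_pos _).le
    _ ≤ max (normP σ P a) (normP σ P b) :=
        max_le_max (le_normP hV ha hv u) (le_normP hV hb hv u)

lemma normP_convKU_le [CompleteSpace k] (hV : (vertices P).Finite) (ha : a ∈ KUP k σ P)
    (hb : b ∈ KUP k σ P) : normP σ P (convKU a b) ≤ normP σ P a * normP σ P b :=
  normP_le (mul_nonneg (normP_nonneg a) (normP_nonneg b)) fun _ v hv =>
    weightedNorm_convolve_le (w := pairingAt σ v) (mul_nonneg (normP_nonneg a) (normP_nonneg b))
      fun x y _ => mul_le_mul (le_normP hV ha hv x) (le_normP hV hb hv y)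
        (weightedNorm_nonneg _ _ _) (normP_nonneg a)

end NormP

section Completeness

variable {k : Type*} [NormedField k] {n : ℕ} {σ P : Set (Fin n → ℝ)}
  {F : ℕ → ↥(Ssigma σ) → k}

lemma cauchySeq_apply_of_normP (hV : (vertices P).Finite) {z : Fin n → ℝ}
    (hz : z ∈ vertices P) (hF : ∀ m, F m ∈ KUP k σ P)
    (hCauchy : ∀ ε > (0 : ℝ), ∃ N, ∀ m ≥ N, ∀ m' ≥ N, normP σ P (F m - F m') < ε)
    (u : ↥(Ssigma σ)) : CauchySeq fun m => F m u := by
  refine Metric.cauchySeq_iff.2 fun ε hε => ?_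
  obtain ⟨N, hN⟩ := hCauchy _ (mul_pos hε (Real.exp_pos (dotp (intCastVec u) z)))
  refine ⟨N, fun m hm m' hm' => ?_⟩
  rw [dist_eq_norm]
  exact lt_of_mul_lt_mul_right
    ((le_normP hV (sub_mem_KUP (hF m) (hF m')) hz u).trans_lt (hN m hm m' hm'))
    (Real.exp_pos _).le

lemma weightedNorm_sub_le_of_tendsto (hV : (vertices P).Finite)
    (hdom : ∀ u : ↥(Ssigma σ), ∀ v ∈ P, ∃ z ∈ vertices P,
      dotp (intCastVec u) v ≤ dotp (intCastVec u) z)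
    (hF : ∀ m, F m ∈ KUP k σ P) {L : ↥(Ssigma σ) → k}
    (hL : ∀ u, Tendsto (fun m => F m u) atTop (𝓝 (L u))) {N : ℕ} {ε : ℝ}
    (hN : ∀ m ≥ N, ∀ m' ≥ N, normP σ P (F m - F m') < ε) {m : ℕ} (hm : N ≤ m)
    (u : ↥(Ssigma σ)) {v : Fin n → ℝ} (hv : v ∈ P) :
    weightedNorm (pairingAt σ v) (F m - L) u ≤ ε := by
  obtain ⟨z, hz, hvz⟩ := hdom u v hv
  calc weightedNorm (pairingAt σ v) (F m - L) u
      ≤ ‖F m u - L u‖ * Real.exp (dotp (intCastVec u) z) :=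
        mul_le_mul_of_nonneg_left (Real.exp_le_exp.2 hvz) (norm_nonneg _)
    _ ≤ ε := le_of_tendsto (((hL u).const_sub (F m u)).norm.mul_const _)
        (eventually_atTop.2 ⟨N, fun m' hm' =>
          (le_normP hV (sub_mem_KUP (hF m) (hF m')) hz u).trans (hN m hm m' hm').le⟩)

theorem exists_tendsto_normP_of_cauchy [CompleteSpace k] (hV : (vertices P).Finite)
    (hVne : (vertices P).Nonempty)
    (hdom : ∀ u : ↥(Ssigma σ), ∀ v ∈ P, ∃ z ∈ vertices P,
      dotp (intCastVec u) v ≤ dotp (intCastVec u) z)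
    (hF : ∀ m, F m ∈ KUP k σ P)
    (hCauchy : ∀ ε > (0 : ℝ), ∃ N, ∀ m ≥ N, ∀ m' ≥ N, normP σ P (F m - F m') < ε) :
    ∃ L ∈ KUP k σ P, ∀ ε > (0 : ℝ), ∃ N, ∀ m ≥ N, normP σ P (F m - L) < ε := by
  obtain ⟨z, hz⟩ := hVne
  choose L hL using fun u =>
    cauchySeq_tendsto_of_complete (cauchySeq_apply_of_normP hV hz hF hCauchy u)
  refine ⟨L, mem_KUP_iff.2 fun v hv => isRestricted_of_forall_approx fun ε hε => ?_,
    fun ε hε => ?_⟩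
  · obtain ⟨N, hN⟩ := hCauchy ε hε
    exact ⟨F N, mem_KUP_iff.1 (hF N) v hv,
      fun u => weightedNorm_sub_le_of_tendsto hV hdom hF hL hN le_rfl u hv⟩
  · obtain ⟨N, hN⟩ := hCauchy (ε / 2) (half_pos hε)
    exact ⟨N, fun m hm => (normP_le (half_pos hε).le fun u v hv =>
      weightedNorm_sub_le_of_tendsto hV hdom hF hL hN hm u hv.1).trans_lt (half_lt_self hε)⟩

end Completeness

/-- Let `k` be a complete nonarchimedean valued field and `P ⊆ ℝⁿ` a
nonempty pointed rational polyhedron with recession cone `σ`.  Then: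
(a) for `a, b ∈ k⟨U_P⟩` and every `u ∈ S_σ` the convolution family
`(a_{u'} b_{u''})_{u'+u''=u}` is summable, and `k⟨U_P⟩` is a commutative `k`-algebra
under pointwise addition, scalar multiplication, and convolution (closure under all
operations, commutativity, associativity, distributivity, unit `δ₀`);
(b) `|a|_P = max_{u ∈ S_σ, v ∈ Vert P} ‖a_u‖ e^{⟨u,v⟩}` is a well-defined maximum and a
nonarchimedean norm: `|a|_P = 0 ↔ a = 0`, `|a+b|_P ≤ max (|a|_P) (|b|_P)`,
`|a*b|_P ≤ |a|_P |b|_P`, and `|c • a|_P = ‖c‖ |a|_P` for `c : k`;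
(c) `k⟨U_P⟩` is complete for `|·|_P` (every Cauchy sequence converges in `k⟨U_P⟩`). -/
theorem stmt12 {k : Type*} [NormedField k] [CompleteSpace k]
    (hna : IsNonarchimedean (fun x : k => ‖x‖))
    {n r : ℕ} (uu : Fin r → (Fin n → ℤ)) (aa : Fin r → ℝ)
    (P σ : Set (Fin n → ℝ))
    (hP : P = {v | ∀ i, dotp (intCastVec (uu i)) v ≤ aa i})
    (hσ : σ = {v | ∀ i, dotp (intCastVec (uu i)) v ≤ 0})
    (hpt : IsPointed σ) (hPne : P.Nonempty) :
    -- (a) summability and the commutative `k`-algebra structure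
    (∀ a ∈ KUP k σ P, ∀ b ∈ KUP k σ P,
      (∀ u : ↥(Ssigma σ),
        Summable (fun q : {q : ↥(Ssigma σ) × ↥(Ssigma σ) // q.1 + q.2 = u} =>
          a (q : ↥(Ssigma σ) × ↥(Ssigma σ)).1 * b (q : ↥(Ssigma σ) × ↥(Ssigma σ)).2)) ∧
      convKU a b ∈ KUP k σ P ∧
      a + b ∈ KUP k σ P ∧ (∀ c : k, c • a ∈ KUP k σ P) ∧
      convKU a b = convKU b a ∧
      (∀ c ∈ KUP k σ P, convKU (convKU a b) c = convKU a (convKU b c) ∧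
        convKU a (b + c) = convKU a b + convKU a c) ∧
      deltaZero k σ ∈ KUP k σ P ∧ convKU (deltaZero k σ) a = a) ∧
    -- (b) `|·|_P` is a well-defined nonarchimedean norm
    (∀ a ∈ KUP k σ P,
      IsGreatest {x : ℝ | ∃ u : ↥(Ssigma σ), ∃ v ∈ vertices P,
          x = ‖a u‖ * Real.exp (dotp (intCastVec (u : Fin n → ℤ)) v)}
        (normP σ P a) ∧
      (normP σ P a = 0 ↔ a = 0) ∧
      (∀ b ∈ KUP k σ P, normP σ P (a + b) ≤ max (normP σ P a) (normP σ P b) ∧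
        normP σ P (convKU a b) ≤ normP σ P a * normP σ P b) ∧
      (∀ c : k, normP σ P (c • a) = ‖c‖ * normP σ P a)) ∧
    -- (c) completeness
    (∀ F : ℕ → (↥(Ssigma σ) → k), (∀ m, F m ∈ KUP k σ P) →
      (∀ ε > (0 : ℝ), ∃ N, ∀ m ≥ N, ∀ m' ≥ N, normP σ P (F m - F m') < ε) →
      ∃ L ∈ KUP k σ P, ∀ ε > (0 : ℝ), ∃ N, ∀ m ≥ N, normP σ P (F m - L) < ε) := by
  have : IsUltrametricDist k := .isUltrametricDist_of_isNonarchimedean_norm hna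
  obtain ⟨hV, hdom⟩ : (vertices P).Finite ∧ ∀ u : ↥(Ssigma σ), ∀ v ∈ P, ∃ z ∈ vertices P,
      dotp (intCastVec u) v ≤ dotp (intCastVec u) z := by
    subst hP hσ
    exact ⟨vertices_polyhedron_finite, fun u v hv => exists_mem_vertices_dotProduct_le u.2
      (commonKernelTrivial_univ_of_isPointed hpt) hv⟩
  have hVne : (vertices P).Nonempty :=
    let ⟨v, hv⟩ := hPne
    let ⟨z, hz, _⟩ := hdom 0 v hv
    ⟨z, hz⟩
  refine ⟨fun a ha b hb => ⟨summable_of_mem_KUP hPne ha hb, convKU_mem_KUP ha hb,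
      add_mem_KUP ha hb, smul_mem_KUP ha, convolve_comm a b,
      fun c hc => ⟨convKU_assoc hPne ha hb hc, convKU_add hPne ha hb hc⟩,
      deltaZero_mem_KUP, deltaZero_convKU a⟩,
    fun a ha => ⟨isGreatest_normP hV hVne ha, normP_eq_zero_iff hV hVne ha,
      fun b hb => ⟨normP_add_le hV ha hb, normP_convKU_le hV ha hb⟩, fun c => normP_smul c a⟩,
    fun F hF hCauchy => exists_tendsto_normP_of_cauchy hV hVne hdom hF hCauchy⟩

end
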